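/- Let A, B be maximal monotone operators on a real Hilbert space H, z ∈ H, β ∈ (0,1), r > 0, and T := (2J_{r(B_z)^{(β)}} − I) ∘ (2J_{r(A_z)^{(β)}} − I). Then Fix(T) ≠ ∅ if and only if the solution set S = {u ∈ H : z ∈ (I + A + B)(u)} is nonempty. -/

import Mathlib

open scoped RealInnerProductSpace

variable {H : Type*} [NormedAddCommGroup H] [InnerProductSpace ℝ H] [CompleteSpace H]

/-- A set-valued operator is monotone. -/
def MonotoneOp (A : H → Set H) : Prop :=
  ∀ ⦃x y x' y' : H⦄, x' ∈ A x → y' ∈ A y → 0 ≤ ⟪x - y, x' - y'⟫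

/-- A set-valued operator is σ-strongly monotone. -/
def StronglyMonotoneOp (σ : ℝ) (A : H → Set H) : Prop :=
  ∀ ⦃x y x' y' : H⦄, x' ∈ A x → y' ∈ A y → σ * ‖x - y‖ ^ 2 ≤ ⟪x - y, x' - y'⟫

/-- A set-valued operator is maximal monotone. -/
def MaximalMonotoneOp (A : H → Set H) : Prop :=
  MonotoneOp A ∧ ∀ x x' : H, (∀ y y' : H, y' ∈ A y → 0 ≤ ⟪x - y, x' - y'⟫) → x' ∈ A x

/-- The operator `(A_z)^{(β)} : x ↦ 2(1-β)·A((1/β)x + z) + ((1-β)/β)x`. -/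
def pert (A : H → Set H) (z : H) (β : ℝ) : H → Set H :=
  fun x => (fun u => (2 * (1 - β)) • u + ((1 - β) / β) • x) '' A (β⁻¹ • x + z)

/-!
Write `R_M := 2 J_{rM} - I`. For monotone `M`, `N` the Douglas–Rachford fixed points of
`R_N ∘ R_M` are exactly the points `x + r m` with `m ∈ M x` and `-m ∈ N x`, so `Fix` is nonempty
iff `0 ∈ (M + N) x` for some `x`. For `M = (A_z)^{(β)}`, `N = (B_z)^{(β)}` (monotone when `A`, `B`
are and `0 < β ≤ 1`), the inclusion `0 ∈ (M + N) x` unfolds, after dividing by `2(1 - β)`, to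
`z ∈ u + A u + B u` with `u = x / β + z`; the map `x ↦ x / β + z` is a bijection of `H`.
-/

section

omit [CompleteSpace H]

theorem MonotoneOp.pert {A : H → Set H} (hA : MonotoneOp A) (z : H) {β : ℝ}
    (hβ0 : 0 < β) (hβ1 : β ≤ 1) : MonotoneOp (pert A z β) := by
  rintro x y _ _ ⟨a, ha, rfl⟩ ⟨b, hb, rfl⟩
  have hab : 0 ≤ ⟪x - y, a - b⟫ := by
    have h := hA ha hb
    rw [show (β⁻¹ • x + z) - (β⁻¹ • y + z) = β⁻¹ • (x - y) by module,
      real_inner_smul_left] at h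
    exact nonneg_of_mul_nonneg_right h (inv_pos.2 hβ0)
  rw [show ((2 * (1 - β)) • a + ((1 - β) / β) • x) - ((2 * (1 - β)) • b + ((1 - β) / β) • y)
      = (2 * (1 - β)) • (a - b) + ((1 - β) / β) • (x - y) by module,
    inner_add_right, real_inner_smul_right, real_inner_smul_right, real_inner_self_eq_norm_sq]
  have hc : 0 ≤ 2 * (1 - β) := by linarith
  have hd : 0 ≤ (1 - β) / β := div_nonneg (by linarith) hβ0.le
  positivity

theorem MonotoneOp.resolvent_eq {M : H → Set H} (hM : MonotoneOp M) {r : ℝ} (hr : 0 < r)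
    {J : H → H} (hJ : ∀ w, ∃ m ∈ M (J w), w = J w + r • m) {x m : H} (hm : m ∈ M x) :
    J (x + r • m) = x := by
  obtain ⟨m', hm', hw⟩ := hJ (x + r • m)
  have hdiff : J (x + r • m) - x = r • (m - m') := by
    linear_combination (norm := module) -hw
  have hsq : ‖J (x + r • m) - x‖ ^ 2 ≤ 0 := by
    have h := hM hm' hm
    rw [hdiff, real_inner_smul_left, ← neg_sub m m', inner_neg_right] at h
    rw [← real_inner_self_eq_norm_sq, hdiff, real_inner_smul_left, real_inner_smul_right]
    nlinarith
  exact sub_eq_zero.mp (norm_eq_zero.mp (pow_eq_zero_iff two_ne_zero |>.mp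
    (le_antisymm hsq (sq_nonneg _))))

theorem douglasRachford_fixedPoints_nonempty_iff {M N : H → Set H} (hM : MonotoneOp M)
    (hN : MonotoneOp N) {r : ℝ} (hr : 0 < r) {JM JN : H → H}
    (hJM : ∀ w, ∃ m ∈ M (JM w), w = JM w + r • m)
    (hJN : ∀ w, ∃ m ∈ N (JN w), w = JN w + r • m) :
    {w : H | (2:ℝ) • JN ((2:ℝ) • JM w - w) - ((2:ℝ) • JM w - w) = w}.Nonempty ↔
      ∃ x, ∃ m ∈ M x, -m ∈ N x := by
  constructor
  · rintro ⟨w, hw⟩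
    rw [Set.mem_ofPred_eq] at hw
    obtain ⟨m, hm, hwm⟩ := hJM w
    obtain ⟨m', hm', hym⟩ := hJN ((2:ℝ) • JM w - w)
    have hJN_eq : JN ((2:ℝ) • JM w - w) = JM w :=
      smul_right_injective H (two_ne_zero' ℝ) (by linear_combination (norm := module) hw)
    rw [hJN_eq] at hym hm'
    have hm'_eq : m' = -m :=
      smul_right_injective H hr.ne' (by linear_combination (norm := module) -hwm - hym)
    exact ⟨JM w, m, hm, hm'_eq ▸ hm'⟩
  · rintro ⟨x, m, hm, hm'⟩
    refine ⟨x + r • m, ?_⟩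
    have hJN_eq : JN (x + r • -m) = x := hN.resolvent_eq hr hJN hm'
    rw [Set.mem_ofPred_eq, hM.resolvent_eq hr hJM hm,
      show (2:ℝ) • x - (x + r • m) = x + r • -m by module, hJN_eq]
    module

theorem exists_mem_pert_neg_mem_pert_iff {A B : H → Set H} {z : H} {β : ℝ} (hβ1 : β ≠ 1)
    (x : H) :
    (∃ m ∈ pert A z β x, -m ∈ pert B z β x) ↔
      ∃ a ∈ A (β⁻¹ • x + z), ∃ b ∈ B (β⁻¹ • x + z), z = β⁻¹ • x + z + a + b := by
  have hc : 2 * (1 - β) ≠ 0 := mul_ne_zero two_ne_zero (sub_ne_zero.2 hβ1.symm)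
  constructor
  · rintro ⟨_, ⟨a, ha, rfl⟩, ⟨b, hb, hab⟩⟩
    have hsum : (2 * (1 - β)) • (a + b + β⁻¹ • x) = 0 := by
      linear_combination (norm := module) hab
    refine ⟨a, ha, b, hb, ?_⟩
    linear_combination (norm := module) -((smul_eq_zero.mp hsum).resolve_left hc)
  · rintro ⟨a, ha, b, hb, hz⟩
    refine ⟨_, ⟨a, ha, rfl⟩, ⟨b, hb, ?_⟩⟩
    linear_combination (norm := module) -(2 * (1 - β)) • hz

end

theorem stmt5 (A B : H → Set H) (hA : MaximalMonotoneOp A) (hB : MaximalMonotoneOp B)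
    (z : H) (β r : ℝ) (hβ : β ∈ Set.Ioo (0:ℝ) 1) (hr : 0 < r) (JA JB : H → H)
    (hJA : ∀ w : H, ∃ m ∈ pert A z β (JA w), w = JA w + r • m)
    (hJB : ∀ w : H, ∃ m ∈ pert B z β (JB w), w = JB w + r • m) :
    {x : H | (2:ℝ) • JB ((2:ℝ) • JA x - x) - ((2:ℝ) • JA x - x) = x}.Nonempty ↔
      {u : H | ∃ a ∈ A u, ∃ b ∈ B u, z = u + a + b}.Nonempty := by
  obtain ⟨hβ0, hβ1⟩ := hβ
  rw [douglasRachford_fixedPoints_nonempty_iff (hA.1.pert z hβ0 hβ1.le) (hB.1.pert z hβ0 hβ1.le)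
    hr hJA hJB]
  constructor
  · rintro ⟨x, hx⟩
    exact ⟨_, (exists_mem_pert_neg_mem_pert_iff hβ1.ne x).1 hx⟩
  · rintro ⟨u, hu⟩
    refine ⟨β • (u - z), (exists_mem_pert_neg_mem_pert_iff hβ1.ne _).2 ?_⟩
    rwa [inv_smul_smul₀ hβ0.ne', sub_add_cancel]
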